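/- arXiv:1309.3117 — 3 statements merged into one kernel-verified Lean document; each statement's English description precedes it below -/
import Mathlib

section
/- Let U ⊂ ℝ^d be a closed set containing 0 in its convex hull and let P_U = {u uᵀ : u ∈ U} ⊂ S_d^+. Then the set K = P_U° ∩ S_d^+ is the largest closed convex subset of S_d^+ satisfying: for all x in the linear span of U, γ_{U ∪ (−U)}(x)² = sup_{M ∈ K} xᵀ M x. Precisely, (i) this identity holds for K = P_U° ∩ S_d^+, and (ii) every closed convex K' ⊂ S_d^+ satisfying this identity is contained in P_U° ∩ S_d^+. -/
/-!
For `M ⪰ 0` the sublevel set `{v | vᵀ M v ≤ 1}` is closed and convex, so if it contains `U` (hence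
`U ∪ -U ∪ {0}`) it contains their closed convex hull, and 2-homogeneity gives `xᵀ M x ≤ γ(x)²`.
Conversely, if `t < γ(x)` then `x ∉ t • hull`, and separating gives a vector `a` with `a ⬝ᵥ v ≤ 1`
on the hull and `t < a ⬝ᵥ x`; testing on `±u` gives `(a ⬝ᵥ u)² ≤ 1` on `U`, so `a aᵀ ∈ K` and
`xᵀ (a aᵀ) x = (a ⬝ᵥ x)² > t²`. Maximality is immediate: if `K'` satisfies the identity, then for
`M ∈ K'` and `u ∈ U` we get `uᵀ M u ≤ γ(u)² ≤ 1`.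
-/

open Matrix Set ENNReal NNReal Pointwise

noncomputable section

/-- The closed convex hull of `C ∪ {0}`. -/
def cvx {E : Type*} [AddCommGroup E] [Module ℝ E] [TopologicalSpace E] (C : Set E) : Set E :=
  closure (convexHull ℝ (insert 0 C))

/-- The (possibly infinite) gauge of the closed convex hull of `C ∪ {0}`:
`γ_C(x) = inf {λ ≥ 0 : x ∈ λ C}`. -/
def gaugeE {E : Type*} [AddCommGroup E] [Module ℝ E] [TopologicalSpace E] (C : Set E) (x : E) :
    ℝ≥0∞ :=
  ⨅ (r : ℝ≥0) (_ : x ∈ (r : ℝ) • cvx C), (r : ℝ≥0∞)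

/-- One-sided polar in the space `S_d` of symmetric matrices, with the trace pairing
`⟨M, N⟩ = tr (M N)`. -/
def symPolar {d : ℕ} (C : Set (Matrix (Fin d) (Fin d) ℝ)) : Set (Matrix (Fin d) (Fin d) ℝ) :=
  {N | N.IsSymm ∧ ∀ M ∈ C, (M * N).trace ≤ 1}

/-- `P_U = {u uᵀ : u ∈ U}`. -/
def PU {d : ℕ} (U : Set (Fin d → ℝ)) : Set (Matrix (Fin d) (Fin d) ℝ) :=
  (fun u => vecMulVec u u) '' U

section Gauge

variable {E : Type*} [AddCommGroup E] [Module ℝ E] [TopologicalSpace E] {C S : Set E}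

lemma cvx_subset (hS : IsClosed S) (hconv : Convex ℝ S) (h0 : 0 ∈ S) (hC : C ⊆ S) :
    cvx C ⊆ S :=
  closure_minimal (convexHull_min (insert_subset h0 hC) hconv) hS

lemma zero_mem_cvx : (0 : E) ∈ cvx C :=
  subset_closure (subset_convexHull ℝ _ (mem_insert 0 C))

lemma subset_cvx : C ⊆ cvx C :=
  fun _ hx => subset_closure (subset_convexHull ℝ _ (mem_insert_of_mem _ hx))

lemma gaugeE_le_of_mem_smul {x : E} {r : ℝ≥0} (h : x ∈ (r : ℝ) • cvx C) : gaugeE C x ≤ r :=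
  iInf₂_le r h

lemma gaugeE_le_one_of_mem {x : E} (hx : x ∈ C) : gaugeE C x ≤ 1 := by
  simpa using gaugeE_le_of_mem_smul (C := C) (r := 1) (by simpa using subset_cvx hx)

lemma ofReal_le_gaugeE_sq {q : E → ℝ} (hq : ∀ v ∈ cvx C, q v ≤ 1)
    (hsmul : ∀ (r : ℝ) v, q (r • v) = r ^ 2 * q v) (x : E) :
    ENNReal.ofReal (q x) ≤ gaugeE C x ^ 2 := by
  have hsqrt : ENNReal.ofReal √(q x) ≤ gaugeE C x := by
    refine le_iInf₂ fun r hr => ?_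
    obtain ⟨v, hv, rfl⟩ := hr
    rw [← ENNReal.ofReal_coe_nnreal, hsmul]
    refine ENNReal.ofReal_le_ofReal (Real.sqrt_le_iff.2 ⟨r.coe_nonneg, ?_⟩)
    nlinarith [hq v hv, sq_nonneg (r : ℝ)]
  calc ENNReal.ofReal (q x) ≤ ENNReal.ofReal (√(q x) ^ 2) :=
        ENNReal.ofReal_le_ofReal (Real.sq_sqrt' ▸ le_max_left _ _)
    _ = ENNReal.ofReal √(q x) ^ 2 := ENNReal.ofReal_pow (Real.sqrt_nonneg _) 2
    _ ≤ gaugeE C x ^ 2 := by gcongr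

end Gauge

section Separation

variable {n : Type*} [Fintype n]

lemma exists_dotProduct_le_one_lt_of_notMem {S : Set (n → ℝ)} (hS : IsClosed S)
    (hconv : Convex ℝ S) (h0 : 0 ∈ S) {x : n → ℝ} (hx : x ∉ S) :
    ∃ a : n → ℝ, (∀ v ∈ S, a ⬝ᵥ v ≤ 1) ∧ 1 < a ⬝ᵥ x := by
  classical
  obtain ⟨f, c, hfS, hcx⟩ := geometric_hahn_banach_closed_point hconv hS hx
  have hc : 0 < c := by simpa using hfS 0 h0
  set b := (dotProductEquiv ℝ n).symm f.toLinearMap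
  have hb : ∀ v, b ⬝ᵥ v = f v := fun v => by
    rw [← dotProductEquiv_apply_apply, LinearEquiv.apply_symm_apply]; rfl
  refine ⟨c⁻¹ • b, fun v hv => ?_, ?_⟩
  · rw [smul_dotProduct, hb, smul_eq_mul, inv_mul_le_one₀ hc]
    exact (hfS v hv).le
  · rwa [smul_dotProduct, hb, smul_eq_mul, one_lt_inv_mul₀ hc]

lemma exists_dotProduct_gt_of_lt_gaugeE {C : Set (n → ℝ)} {x : n → ℝ} {t : ℝ≥0} (ht : 0 < t)
    (hlt : (t : ℝ≥0∞) < gaugeE C x) :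
    ∃ a : n → ℝ, (∀ v ∈ cvx C, a ⬝ᵥ v ≤ 1) ∧ (t : ℝ) < a ⬝ᵥ x := by
  have ht' : (t : ℝ) ≠ 0 := by positivity
  have hx : (t : ℝ)⁻¹ • x ∉ cvx C := fun h =>
    hlt.not_ge (gaugeE_le_of_mem_smul ((mem_smul_set_iff_inv_smul_mem₀ ht' _ _).2 h))
  obtain ⟨a, ha, hax⟩ := exists_dotProduct_le_one_lt_of_notMem isClosed_closure
    (convex_convexHull ℝ _).closure zero_mem_cvx hx
  refine ⟨a, ha, ?_⟩
  rwa [dotProduct_smul, smul_eq_mul, one_lt_inv_mul₀ (by positivity)] at hax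

lemma gaugeE_sq_le_of_forall_dotProduct_le_one {C : Set (n → ℝ)} {x : n → ℝ} {s : ℝ≥0∞}
    (h : ∀ a : n → ℝ, (∀ v ∈ cvx C, a ⬝ᵥ v ≤ 1) → ENNReal.ofReal ((a ⬝ᵥ x) ^ 2) ≤ s) :
    gaugeE C x ^ 2 ≤ s := by
  refine ENNReal.le_of_forall_nnreal_lt fun r hr => ?_
  rcases eq_or_ne r 0 with rfl | hr0
  · simp
  set t := NNReal.sqrt r
  have htr : (t : ℝ≥0∞) ^ 2 = r := by rw [← ENNReal.coe_pow, NNReal.sq_sqrt]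
  have hlt : (t : ℝ≥0∞) < gaugeE C x := by
    by_contra! hle
    exact hr.not_ge (htr ▸ by gcongr)
  obtain ⟨a, ha, hax⟩ := exists_dotProduct_gt_of_lt_gaugeE (by positivity) hlt
  calc (r : ℝ≥0∞) = ENNReal.ofReal ((t : ℝ) ^ 2) := by
        rw [ENNReal.ofReal_pow t.coe_nonneg, ENNReal.ofReal_coe_nnreal, htr]
    _ ≤ ENNReal.ofReal ((a ⬝ᵥ x) ^ 2) := ENNReal.ofReal_le_ofReal (by gcongr)
    _ ≤ s := h a ha

end Separation

section QuadraticForm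

variable {n : Type*} [Fintype n]

lemma trace_vecMulVec_self_mul (u : n → ℝ) (M : Matrix n n ℝ) :
    (vecMulVec u u * M).trace = u ⬝ᵥ M *ᵥ u := by
  rw [vecMulVec_mul, trace_vecMulVec, dotProduct_comm, dotProduct_mulVec]

lemma dotProduct_vecMulVec_self_mulVec (a x : n → ℝ) :
    x ⬝ᵥ vecMulVec a a *ᵥ x = (a ⬝ᵥ x) ^ 2 := by
  rw [dotProduct_mulVec, vecMul_vecMulVec, smul_dotProduct, smul_eq_mul, dotProduct_comm, sq]

lemma dotProduct_mulVec_smul_self (M : Matrix n n ℝ) (r : ℝ) (v : n → ℝ) :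
    (r • v) ⬝ᵥ M *ᵥ (r • v) = r ^ 2 * (v ⬝ᵥ M *ᵥ v) := by
  rw [mulVec_smul, smul_dotProduct, dotProduct_smul, smul_eq_mul, smul_eq_mul]
  ring

lemma isClosed_setOf_dotProduct_mulVec_le (M : Matrix n n ℝ) (c : ℝ) :
    IsClosed {v : n → ℝ | v ⬝ᵥ M *ᵥ v ≤ c} :=
  isClosed_le (by fun_prop) continuous_const

lemma Matrix.PosSemidef.convex_setOf_dotProduct_mulVec_le {M : Matrix n n ℝ} (hM : M.PosSemidef)
    (c : ℝ) : Convex ℝ {v : n → ℝ | v ⬝ᵥ M *ᵥ v ≤ c} := by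
  intro v hv w hw a b ha hb hab
  have hvw : 0 ≤ (v - w) ⬝ᵥ M *ᵥ (v - w) := by simpa using hM.dotProduct_mulVec_nonneg (v - w)
  have hq : (a • v + b • w) ⬝ᵥ M *ᵥ (a • v + b • w) = a * (v ⬝ᵥ M *ᵥ v) + b * (w ⬝ᵥ M *ᵥ w)
      - a * b * ((v - w) ⬝ᵥ M *ᵥ (v - w)) := by
    obtain rfl : b = 1 - a := by linarith
    simp only [mulVec_add, mulVec_sub, mulVec_smul, add_dotProduct, sub_dotProduct,
      dotProduct_add, dotProduct_sub, smul_dotProduct, dotProduct_smul, smul_eq_mul]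
    ring
  change _ ≤ c at hv hw ⊢
  rw [hq]
  have hc : c = a * c + b * c := by rw [← add_mul, hab, one_mul]
  linarith [mul_le_mul_of_nonneg_left hv ha, mul_le_mul_of_nonneg_left hw hb,
    mul_nonneg (mul_nonneg ha hb) hvw]

lemma Matrix.PosSemidef.ofReal_dotProduct_mulVec_le_gaugeE_sq {M : Matrix n n ℝ}
    (hM : M.PosSemidef) {U : Set (n → ℝ)} (hU : ∀ u ∈ U, u ⬝ᵥ M *ᵥ u ≤ 1) (x : n → ℝ) :
    ENNReal.ofReal (x ⬝ᵥ M *ᵥ x) ≤ gaugeE (U ∪ -U) x ^ 2 := by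
  have hUU : U ∪ -U ⊆ {v | v ⬝ᵥ M *ᵥ v ≤ 1} := by
    rintro v (hv | hv)
    · exact hU v hv
    · show v ⬝ᵥ M *ᵥ v ≤ 1
      simpa [mulVec_neg] using hU (-v) hv
  have hcvx : cvx (U ∪ -U) ⊆ {v | v ⬝ᵥ M *ᵥ v ≤ 1} :=
    cvx_subset (isClosed_setOf_dotProduct_mulVec_le M 1) (hM.convex_setOf_dotProduct_mulVec_le 1)
      (show (0 : n → ℝ) ⬝ᵥ M *ᵥ 0 ≤ 1 by simp) hUU
  exact ofReal_le_gaugeE_sq hcvx (dotProduct_mulVec_smul_self M) x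

end QuadraticForm

variable {d : ℕ}

lemma mem_symPolar_PU_iff {U : Set (Fin d → ℝ)} {N : Matrix (Fin d) (Fin d) ℝ} :
    N ∈ symPolar (PU U) ↔ N.IsSymm ∧ ∀ u ∈ U, u ⬝ᵥ N *ᵥ u ≤ 1 := by
  simp [symPolar, PU, trace_vecMulVec_self_mul]

lemma vecMulVec_self_mem_symPolar_PU {U : Set (Fin d → ℝ)} {a : Fin d → ℝ}
    (ha : ∀ u ∈ U, (a ⬝ᵥ u) ^ 2 ≤ 1) : vecMulVec a a ∈ symPolar (PU U) :=
  mem_symPolar_PU_iff.2 ⟨transpose_vecMulVec a a, fun u hu => by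
    rw [dotProduct_vecMulVec_self_mulVec]; exact ha u hu⟩

lemma gaugeE_sq_le_iSup_symPolar_PU (U : Set (Fin d → ℝ)) (x : Fin d → ℝ) :
    gaugeE (U ∪ -U) x ^ 2 ≤
      ⨆ M ∈ symPolar (PU U) ∩ {M | M.PosSemidef}, ENNReal.ofReal (x ⬝ᵥ M *ᵥ x) := by
  refine gaugeE_sq_le_of_forall_dotProduct_le_one fun a ha => ?_
  have haU : ∀ u ∈ U, (a ⬝ᵥ u) ^ 2 ≤ 1 := fun u hu => by
    have h₁ := ha u (subset_cvx (Or.inl hu))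
    have h₂ := ha (-u) (subset_cvx (Or.inr (by simpa using hu)))
    rw [dotProduct_neg] at h₂
    nlinarith
  have hM : vecMulVec a a ∈ symPolar (PU U) ∩ {M | M.PosSemidef} :=
    ⟨vecMulVec_self_mem_symPolar_PU haU, by simpa using posSemidef_vecMulVec_self_star a⟩
  rw [← dotProduct_vecMulVec_self_mulVec]
  exact le_iSup₂ (f := fun M (_ : M ∈ symPolar (PU U) ∩ {M | M.PosSemidef}) =>
    ENNReal.ofReal (x ⬝ᵥ M *ᵥ x)) _ hM

theorem statement0_general {d : ℕ} (U : Set (Fin d → ℝ)) :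
    (∀ x ∈ Submodule.span ℝ U,
        (gaugeE (U ∪ -U) x) ^ 2 =
          ⨆ M ∈ symPolar (PU U) ∩ {M | M.PosSemidef},
            ENNReal.ofReal (x ⬝ᵥ M.mulVec x)) ∧
    (∀ K' : Set (Matrix (Fin d) (Fin d) ℝ), IsClosed K' → Convex ℝ K' →
        K' ⊆ {M | M.PosSemidef} →
        (∀ x ∈ Submodule.span ℝ U,
          (gaugeE (U ∪ -U) x) ^ 2 = ⨆ M ∈ K', ENNReal.ofReal (x ⬝ᵥ M.mulVec x)) →
        K' ⊆ symPolar (PU U) ∩ {M | M.PosSemidef}) := by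
  refine ⟨fun x _ => le_antisymm (gaugeE_sq_le_iSup_symPolar_PU U x) (iSup₂_le fun M hM => ?_), ?_⟩
  · exact hM.2.ofReal_dotProduct_mulVec_le_gaugeE_sq (mem_symPolar_PU_iff.1 hM.1).2 x
  rintro K' - - hpsd hK' M hM
  refine ⟨mem_symPolar_PU_iff.2 ⟨isHermitian_iff_isSymm.1 (hpsd hM).1, fun u hu => ?_⟩, hpsd hM⟩
  have hle : ENNReal.ofReal (u ⬝ᵥ M *ᵥ u) ≤ gaugeE (U ∪ -U) u ^ 2 := by
    rw [hK' u (Submodule.subset_span hu)]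
    exact le_iSup₂ (f := fun M (_ : M ∈ K') => ENNReal.ofReal (u ⬝ᵥ M *ᵥ u)) M hM
  have hgauge : gaugeE (U ∪ -U) u ^ 2 ≤ 1 :=
    pow_le_one₀ bot_le (gaugeE_le_one_of_mem (Or.inl hu))
  exact ENNReal.ofReal_le_one.1 (hle.trans hgauge)

/-- For a closed set `U ⊂ ℝ^d` containing `0` in its convex hull, `K = P_U° ∩ S_d^+` is the
largest closed convex set of positive semidefinite matrices such that
`γ_{U ∪ (−U)}(x)² = sup_{M ∈ K} xᵀ M x` for all `x` in the span of `U`. -/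
theorem statement0 {d : ℕ} (U : Set (Fin d → ℝ)) (hUc : IsClosed U)
    (hU0 : (0 : Fin d → ℝ) ∈ convexHull ℝ U) :
    (∀ x ∈ Submodule.span ℝ U,
        (gaugeE (U ∪ -U) x) ^ 2 =
          ⨆ M ∈ symPolar (PU U) ∩ {M | M.PosSemidef},
            ENNReal.ofReal (x ⬝ᵥ M.mulVec x)) ∧
    (∀ K' : Set (Matrix (Fin d) (Fin d) ℝ), IsClosed K' → Convex ℝ K' →
        K' ⊆ {M | M.PosSemidef} →
        (∀ x ∈ Submodule.span ℝ U,
          (gaugeE (U ∪ -U) x) ^ 2 = ⨆ M ∈ K', ENNReal.ofReal (x ⬝ᵥ M.mulVec x)) →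
        K' ⊆ symPolar (PU U) ∩ {M | M.PosSemidef}) :=
  statement0_general U

end
end

section
/- For p ∈ [1,2) and every x ∈ ℝ^d, the squared ℓ_p-norm has the variational representation ‖x‖_p² = inf { Σ_{i=1}^d x_i²/η_i : η ∈ ℝ_+^d, ‖η‖_{p/(2−p)} ≤ 1, η_i > 0 whenever x_i ≠ 0 }. -/
/-!
Hölder's inequality with the conjugate exponents `2/p` and `2/(2-p)`, applied to the factorization
`|x_i|^p = (x_i²/η_i)^(p/2) · η_i^(p/2)`, gives `‖x‖_p² ≤ (∑ x_i²/η_i) · ‖η‖_{p/(2-p)}`, so no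
admissible `η` beats `‖x‖_p²`. Equality holds for `η_i = (|x_i|/‖x‖_p)^(2-p)`.
-/

open Real Finset

variable {ι : Type*} [Fintype ι] {p : ℝ}

lemma sum_abs_rpow_nonneg (x : ι → ℝ) (p : ℝ) : 0 ≤ ∑ i, |x i| ^ p :=
  sum_nonneg fun _ _ ↦ rpow_nonneg (abs_nonneg _) _

lemma sum_abs_rpow_le_mul_of_weights (hp0 : 0 < p) (hp2 : p < 2) (x η : ι → ℝ)
    (hη : ∀ i, 0 ≤ η i) (hsupp : ∀ i, x i ≠ 0 → 0 < η i) :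
    ∑ i, |x i| ^ p ≤
      (∑ i, x i ^ 2 / η i) ^ (p / 2) * (∑ i, η i ^ (p / (2 - p))) ^ ((2 - p) / 2) := by
  have hconj : HolderConjugate (1 / (p / 2)) (1 / ((2 - p) / 2)) :=
    holderConjugate_one_div (by positivity) (by linarith) (by ring)
  have hfactor : ∀ i, (x i ^ 2 / η i) ^ (p / 2) * η i ^ (p / 2) = |x i| ^ p := by
    intro i
    rcases eq_or_ne (x i) 0 with hxi | hxi
    · simp [hxi, zero_rpow hp0.ne', zero_rpow (half_pos hp0).ne']
    · have hηi := hsupp i hxi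
      rw [← mul_rpow (div_nonneg (sq_nonneg _) hηi.le) hηi.le, div_mul_cancel₀ _ hηi.ne',
        ← sq_abs, ← rpow_natCast, ← rpow_mul (abs_nonneg _)]
      norm_num [mul_div_cancel₀]
  have hfirst : ∀ i, ((x i ^ 2 / η i) ^ (p / 2)) ^ (1 / (p / 2)) = x i ^ 2 / η i := fun i ↦ by
    rw [← rpow_mul (div_nonneg (sq_nonneg _) (hη i)), mul_one_div_cancel (by positivity),
      rpow_one]
  have hsecond : ∀ i, (η i ^ (p / 2)) ^ (1 / ((2 - p) / 2)) = η i ^ (p / (2 - p)) := fun i ↦ by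
    rw [← rpow_mul (hη i)]
    congr 1
    field_simp
  have holder := inner_le_Lp_mul_Lq_of_nonneg univ hconj
    (f := fun i ↦ (x i ^ 2 / η i) ^ (p / 2)) (g := fun i ↦ η i ^ (p / 2))
    (fun i _ ↦ rpow_nonneg (div_nonneg (sq_nonneg _) (hη i)) _) (fun i _ ↦ rpow_nonneg (hη i) _)
  simpa only [hfactor, hfirst, hsecond, one_div_one_div] using holder

lemma rpow_one_div_sq_le_sum_sq_div_mul (hp0 : 0 < p) (hp2 : p < 2) (x η : ι → ℝ)
    (hη : ∀ i, 0 ≤ η i) (hsupp : ∀ i, x i ≠ 0 → 0 < η i) :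
    ((∑ i, |x i| ^ p) ^ (1 / p)) ^ 2 ≤
      (∑ i, x i ^ 2 / η i) * (∑ i, η i ^ (p / (2 - p))) ^ ((2 - p) / p) := by
  have hS := sum_abs_rpow_nonneg x p
  have hT : 0 ≤ ∑ i, x i ^ 2 / η i := sum_nonneg fun i _ ↦ div_nonneg (sq_nonneg _) (hη i)
  have hC : 0 ≤ ∑ i, η i ^ (p / (2 - p)) := sum_nonneg fun i _ ↦ rpow_nonneg (hη i) _
  have hrhs : 0 ≤ (∑ i, x i ^ 2 / η i) * (∑ i, η i ^ (p / (2 - p))) ^ ((2 - p) / p) :=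
    mul_nonneg hT (rpow_nonneg hC _)
  have holder : ∑ i, |x i| ^ p ≤
      ((∑ i, x i ^ 2 / η i) * (∑ i, η i ^ (p / (2 - p))) ^ ((2 - p) / p)) ^ (p / 2) := by
    rw [mul_rpow hT (rpow_nonneg hC _), ← rpow_mul hC]
    convert sum_abs_rpow_le_mul_of_weights hp0 hp2 x η hη hsupp using 3
    field_simp
  calc ((∑ i, |x i| ^ p) ^ (1 / p)) ^ 2 = (∑ i, |x i| ^ p) ^ (2 / p) := by
        rw [← rpow_natCast, ← rpow_mul hS]
        ring_nf
    _ ≤ (((∑ i, x i ^ 2 / η i) * (∑ i, η i ^ (p / (2 - p))) ^ ((2 - p) / p)) ^ (p / 2))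
          ^ (2 / p) := rpow_le_rpow hS holder (by positivity)
    _ = _ := by rw [← inv_div p 2, rpow_rpow_inv hrhs (by positivity)]

/-- At `x = 0` the junk value `0 / 0 = 0` makes this the zero vector, which is still admissible. -/
noncomputable def lpOptimalWeight (p : ℝ) (x : ι → ℝ) (i : ι) : ℝ :=
  (|x i| / (∑ j, |x j| ^ p) ^ (1 / p)) ^ (2 - p)

section lpOptimalWeight

variable (x : ι → ℝ)

lemma lpOptimalWeight_nonneg (i : ι) : 0 ≤ lpOptimalWeight p x i :=
  rpow_nonneg (div_nonneg (abs_nonneg _) (rpow_nonneg (sum_abs_rpow_nonneg x p) _)) _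

lemma lpOptimalWeight_pos {i : ι} (hxi : x i ≠ 0) : 0 < lpOptimalWeight p x i := by
  have hS : 0 < ∑ j, |x j| ^ p :=
    (rpow_pos_of_pos (abs_pos.2 hxi) p).trans_le <|
      single_le_sum (fun j _ ↦ rpow_nonneg (abs_nonneg (x j)) p) (mem_univ i)
  exact rpow_pos_of_pos (div_pos (abs_pos.2 hxi) (rpow_pos_of_pos hS _)) _

lemma lpOptimalWeight_rpow_sum_le_one (hp0 : 0 < p) (hp2 : p < 2) :
    (∑ i, lpOptimalWeight p x i ^ (p / (2 - p))) ^ ((2 - p) / p) ≤ 1 := by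
  set S := ∑ j, |x j| ^ p
  have hS : 0 ≤ S := sum_abs_rpow_nonneg x p
  have hN : 0 ≤ S ^ (1 / p) := rpow_nonneg hS _
  have hterm : ∀ i, lpOptimalWeight p x i ^ (p / (2 - p)) = |x i| ^ p / S := fun i ↦ by
    rw [lpOptimalWeight, ← rpow_mul (div_nonneg (abs_nonneg _) hN),
      mul_div_cancel₀ _ (by linarith), div_rpow (abs_nonneg _) hN, one_div,
      rpow_inv_rpow hS hp0.ne']
  rw [sum_congr rfl fun i _ ↦ hterm i, ← sum_div]
  exact rpow_le_one (div_nonneg hS hS) (div_self_le_one S) (by bound)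

lemma sum_sq_div_lpOptimalWeight (hp0 : 0 < p) :
    ∑ i, x i ^ 2 / lpOptimalWeight p x i = ((∑ i, |x i| ^ p) ^ (1 / p)) ^ 2 := by
  set S := ∑ j, |x j| ^ p
  set N := S ^ (1 / p)
  have hS : 0 ≤ S := sum_abs_rpow_nonneg x p
  have hN : 0 ≤ N := rpow_nonneg hS _
  have hterm : ∀ i, x i ^ 2 / lpOptimalWeight p x i = |x i| ^ p * N ^ (2 - p) := fun i ↦ by
    rcases eq_or_ne (x i) 0 with hxi | hxi
    · simp [hxi, zero_rpow hp0.ne']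
    · rw [lpOptimalWeight, div_rpow (abs_nonneg _) hN, div_div_eq_mul_div, mul_div_right_comm,
        ← sq_abs, ← rpow_natCast, ← rpow_sub (abs_pos.2 hxi)]
      norm_num
  have hNp : N ^ p = S := by simp only [N, one_div, rpow_inv_rpow hS hp0.ne']
  calc ∑ i, x i ^ 2 / lpOptimalWeight p x i = N ^ p * N ^ (2 - p) := by
        rw [sum_congr rfl fun i _ ↦ hterm i, ← sum_mul, hNp]
    _ = N ^ 2 := by rw [← rpow_add' hN (by norm_num)]; norm_num

end lpOptimalWeight

/-- For `p ∈ [1, 2)` and `x ∈ ℝ^d`,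
`‖x‖_p² = inf {Σ x_i²/η_i : η ≥ 0, ‖η‖_{p/(2−p)} ≤ 1, η_i > 0 whenever x_i ≠ 0}`. -/
theorem statement5 {d : ℕ} (p : ℝ) (hp1 : 1 ≤ p) (hp2 : p < 2) (x : Fin d → ℝ) :
    ((∑ i, |x i| ^ p) ^ (1 / p)) ^ 2 =
      sInf {s : ℝ | ∃ η : Fin d → ℝ, (∀ i, 0 ≤ η i) ∧
        (∑ i, η i ^ (p / (2 - p))) ^ ((2 - p) / p) ≤ 1 ∧
        (∀ i, x i ≠ 0 → 0 < η i) ∧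
        s = ∑ i, (x i) ^ 2 / η i} := by
  have hp0 : 0 < p := by linarith
  refine (IsLeast.csInf_eq ⟨?attained, ?lower⟩).symm
  case attained =>
    exact ⟨lpOptimalWeight p x, lpOptimalWeight_nonneg x,
      lpOptimalWeight_rpow_sum_le_one x hp0 hp2, fun i hxi ↦ lpOptimalWeight_pos x hxi,
      (sum_sq_div_lpOptimalWeight x hp0).symm⟩
  case lower =>
    rintro _ ⟨η, hη, hnorm, hsupp, rfl⟩
    calc ((∑ i, |x i| ^ p) ^ (1 / p)) ^ 2
        ≤ (∑ i, x i ^ 2 / η i) * (∑ i, η i ^ (p / (2 - p))) ^ ((2 - p) / p) :=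
          rpow_one_div_sq_le_sum_sq_div_mul hp0 hp2 x η hη hsupp
      _ ≤ ∑ i, x i ^ 2 / η i :=
          mul_le_of_le_one_right (sum_nonneg fun i _ ↦ div_nonneg (sq_nonneg _) (hη i)) hnorm
end

section
/- Let n ≥ 2 and let X_1, …, X_r be independent, identically distributed random variables, each with the Beta distribution with parameters (1/2, (n−1)/2). Then E[max_{1 ≤ i ≤ r} X_i] ≤ (4 log r + 16)/n. -/
/-!
Moment method: for `k ≥ 1`, Jensen's inequality and `(max_i X_i)^k ≤ ∑_i X_i^k` give
`E[max_i X_i]^k ≤ r E[X_1^k]`. The `k`-th moment of `Beta(1/2, (n-1)/2)` is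
`∏_{j<k} (2j+1)/(n+2j) ≤ (2k-1)!!/n^k ≤ (k/n)^k`, so `E[max_i X_i] ≤ r^{1/k} k/n`,
and `k = ⌈log r⌉ + 1` makes `r^{1/k} ≤ e < 3`.
-/

open MeasureTheory ProbabilityTheory

noncomputable section

/-- The Beta distribution with parameters `(a, b)` on `[0, 1]`, with density
`x^{a−1} (1−x)^{b−1} / B(a, b)`, where `B(a, b) = Γ(a) Γ(b) / Γ(a+b)`. -/
def betaMeasure (a b : ℝ) : Measure ℝ :=
  (volume.restrict (Set.Ioo (0 : ℝ) 1)).withDensity fun x =>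
    ENNReal.ofReal (x ^ (a - 1) * (1 - x) ^ (b - 1) /
      (Real.Gamma a * Real.Gamma b / Real.Gamma (a + b)))

open Finset

theorem Real.Gamma_add_nat_eq_prod_mul {a : ℝ} (ha : 0 < a) (k : ℕ) :
    Real.Gamma (a + k) = (∏ j ∈ range k, (a + j)) * Real.Gamma a := by
  induction k with
  | zero => simp
  | succ k ih =>
    rw [Nat.cast_succ, ← add_assoc, Real.Gamma_add_one (by positivity), ih, prod_range_succ]
    ring

theorem integral_Ioo_rpow_mul_one_sub_rpow {a b : ℝ} (ha : 0 < a) (hb : 0 < b) :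
    ∫ x in Set.Ioo (0 : ℝ) 1, x ^ (a - 1) * (1 - x) ^ (b - 1) =
      Real.Gamma a * Real.Gamma b / Real.Gamma (a + b) := by
  have hbeta : Complex.betaIntegral a b =
      ((∫ x in Set.Ioo (0 : ℝ) 1, x ^ (a - 1) * (1 - x) ^ (b - 1) : ℝ) : ℂ) := by
    rw [Complex.betaIntegral, intervalIntegral.integral_of_le zero_le_one,
      ← Measure.restrict_congr_set Ioo_ae_eq_Ioc, ← integral_complex_ofReal]
    refine setIntegral_congr_fun measurableSet_Ioo fun x ⟨hx0, hx1⟩ => ?_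
    rw [Complex.ofReal_mul, Complex.ofReal_cpow hx0.le, Complex.ofReal_cpow (by linarith)]
    push_cast
    ring
  have h := Complex.betaIntegral_eq_Gamma_mul_div a b (by simpa) (by simpa)
  rw [hbeta, ← Complex.ofReal_add, Complex.Gamma_ofReal, Complex.Gamma_ofReal,
    Complex.Gamma_ofReal] at h
  exact_mod_cast h

theorem ae_mem_Ioo_betaMeasure (a b : ℝ) : ∀ᵐ x ∂_root_.betaMeasure a b, x ∈ Set.Ioo (0 : ℝ) 1 :=
  (withDensity_absolutelyContinuous _ _).ae_le (ae_restrict_mem measurableSet_Ioo)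

theorem integral_pow_betaMeasure {a b : ℝ} (ha : 0 < a) (hb : 0 < b) (k : ℕ) :
    ∫ x, x ^ k ∂_root_.betaMeasure a b =
      (∏ j ∈ range k, (a + j)) / ∏ j ∈ range k, (a + b + j) := by
  set B := Real.Gamma a * Real.Gamma b / Real.Gamma (a + b)
  rw [_root_.betaMeasure, integral_withDensity_eq_integral_toReal_smul (by fun_prop)
    (ae_of_all _ fun _ => ENNReal.ofReal_lt_top)]
  have hintegrand : ∫ x in Set.Ioo (0 : ℝ) 1,
      (ENNReal.ofReal (x ^ (a - 1) * (1 - x) ^ (b - 1) / B)).toReal • x ^ k =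
      (∫ x in Set.Ioo (0 : ℝ) 1, x ^ (a + k - 1) * (1 - x) ^ (b - 1)) / B := by
    rw [← integral_div]
    refine setIntegral_congr_fun measurableSet_Ioo fun x ⟨hx0, hx1⟩ => ?_
    rw [ENNReal.toReal_ofReal (by have := (sub_pos.2 hx1).le; positivity), smul_eq_mul,
      add_sub_right_comm, Real.rpow_add hx0, Real.rpow_natCast]
    ring
  rw [hintegrand, integral_Ioo_rpow_mul_one_sub_rpow (by positivity) hb, add_right_comm,
    Real.Gamma_add_nat_eq_prod_mul ha, Real.Gamma_add_nat_eq_prod_mul (add_pos ha hb)]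
  simp only [B]
  field_simp

/-- Pairing `j` with `k - 1 - j`: `(2j+1)(2(k-1-j)+1) ≤ k²` by AM-GM. -/
theorem prod_range_two_mul_add_one_le_pow (k : ℕ) : ∏ j ∈ range k, (2 * j + 1) ≤ k ^ k := by
  have hsq : (∏ j ∈ range k, (2 * j + 1)) ^ 2 ≤ (k ^ k) ^ 2 :=
    calc (∏ j ∈ range k, (2 * j + 1)) ^ 2
        = ∏ j ∈ range k, (2 * j + 1) * (2 * (k - 1 - j) + 1) := by
          rw [sq, prod_mul_distrib, prod_range_reflect (fun j => 2 * j + 1)]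
      _ ≤ ∏ _j ∈ range k, k ^ 2 := prod_le_prod' fun j hj => by
          obtain ⟨m, rfl⟩ : ∃ m, k = j + m + 1 := ⟨k - 1 - j, by simp at hj; omega⟩
          rw [show j + m + 1 - 1 - j = m by omega]
          nlinarith [two_mul_le_add_sq j m]
      _ = (k ^ k) ^ 2 := by rw [prod_const, card_range, ← pow_mul, ← pow_mul, mul_comm]
  exact le_of_pow_le_pow_left₀ two_ne_zero (Nat.zero_le _) hsq

theorem integral_pow_betaMeasure_half_le {n : ℕ} (hn : 2 ≤ n) (k : ℕ) :
    ∫ x, x ^ k ∂_root_.betaMeasure (1 / 2) (((n : ℝ) - 1) / 2) ≤ ((k : ℝ) / n) ^ k := by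
  have hn' : (2 : ℝ) ≤ n := by exact_mod_cast hn
  rw [integral_pow_betaMeasure (by norm_num) (by linarith)]
  calc (∏ j ∈ range k, (1 / 2 + (j : ℝ))) / ∏ j ∈ range k, (1 / 2 + ((n : ℝ) - 1) / 2 + j)
      = ∏ j ∈ range k, (2 * (j : ℝ) + 1) / (n + 2 * j) := by
        rw [← prod_div_distrib]
        refine prod_congr rfl fun j _ => ?_
        rw [← mul_div_mul_left _ _ (two_ne_zero' ℝ)]
        ring_nf
    _ ≤ ∏ j ∈ range k, (2 * (j : ℝ) + 1) / n :=
        prod_le_prod (fun j _ => by positivity) fun j _ => by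
          gcongr
          linarith [j.cast_nonneg (α := ℝ)]
    _ = ((∏ j ∈ range k, (2 * j + 1) : ℕ) : ℝ) / n ^ k := by
        rw [prod_div_distrib, prod_const, card_range]
        push_cast
        rfl
    _ ≤ (k : ℝ) ^ k / n ^ k := by
        gcongr
        exact_mod_cast prod_range_two_mul_add_one_le_pow k
    _ = ((k : ℝ) / n) ^ k := (div_pow _ _ _).symm

theorem Real.iSup_pow_le_sum_pow {ι : Type*} [Fintype ι] {f : ι → ℝ} (hf : ∀ i, 0 ≤ f i)
    {k : ℕ} (hk : k ≠ 0) : (⨆ i, f i) ^ k ≤ ∑ i, f i ^ k := by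
  cases isEmpty_or_nonempty ι
  · simp [zero_pow hk]
  · obtain ⟨i, hi⟩ := exists_eq_ciSup_of_finite (f := f)
    rw [← hi]
    exact single_le_sum (fun j _ => pow_nonneg (hf j) k) (mem_univ i)

section Moments

variable {Ω : Type*} [MeasurableSpace Ω] {μ : Measure Ω}

theorem integrable_pow_of_ae_mem_Icc [IsFiniteMeasure μ] {f : Ω → ℝ}
    (hf : AEStronglyMeasurable f μ) (h01 : ∀ᵐ ω ∂μ, f ω ∈ Set.Icc 0 1) (k : ℕ) :
    Integrable (fun ω => f ω ^ k) μ :=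
  Integrable.of_bound (hf.pow k) 1 <| h01.mono fun ω h => by
    rw [Real.norm_eq_abs, abs_pow, abs_of_nonneg h.1]
    exact pow_le_one₀ h.1 h.2

theorem integral_iSup_pow_le_sum [IsProbabilityMeasure μ] {ι : Type*} [Fintype ι]
    {X : ι → Ω → ℝ} (hX : ∀ i, Measurable (X i)) (hX01 : ∀ i, ∀ᵐ ω ∂μ, X i ω ∈ Set.Icc 0 1)
    {k : ℕ} (hk : k ≠ 0) :
    (∫ ω, ⨆ i, X i ω ∂μ) ^ k ≤ ∑ i, ∫ ω, X i ω ^ k ∂μ := by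
  have hae : ∀ᵐ ω ∂μ, ∀ i, X i ω ∈ Set.Icc 0 1 := ae_all_iff.2 hX01
  have hY01 : ∀ᵐ ω ∂μ, (⨆ i, X i ω) ∈ Set.Icc 0 1 := hae.mono fun ω h =>
    ⟨Real.iSup_nonneg fun i => (h i).1, Real.iSup_le (fun i => (h i).2) zero_le_one⟩
  have hYm : AEStronglyMeasurable (fun ω => ⨆ i, X i ω) μ :=
    (Measurable.iSup hX).aestronglyMeasurable
  have hXk i := integrable_pow_of_ae_mem_Icc (hX i).aestronglyMeasurable (hX01 i) k
  calc (∫ ω, ⨆ i, X i ω ∂μ) ^ k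
      ≤ ∫ ω, (⨆ i, X i ω) ^ k ∂μ :=
        (convexOn_pow k).map_integral_le (continuous_pow k).continuousOn isClosed_Ici
          (hY01.mono fun _ h => h.1) (by simpa using integrable_pow_of_ae_mem_Icc hYm hY01 1)
          (integrable_pow_of_ae_mem_Icc hYm hY01 k)
    _ ≤ ∫ ω, ∑ i, X i ω ^ k ∂μ :=
        integral_mono_ae (integrable_pow_of_ae_mem_Icc hYm hY01 k)
          (integrable_finsetSum _ fun i _ => hXk i)
          (hae.mono fun ω h => Real.iSup_pow_le_sum_pow (fun i => (h i).1) hk)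
    _ = ∑ i, ∫ ω, X i ω ^ k ∂μ := integral_finsetSum _ fun i _ => hXk i

end Moments

theorem le_three_pow_ceil_log (x : ℝ) : x ≤ 3 ^ ⌈Real.log x⌉₊ :=
  calc x ≤ Real.exp (Real.log x) := Real.le_exp_log x
    _ ≤ Real.exp ⌈Real.log x⌉₊ := Real.exp_le_exp.2 (Nat.le_ceil _)
    _ = Real.exp 1 ^ ⌈Real.log x⌉₊ := by rw [← Real.exp_nat_mul, mul_one]
    _ ≤ 3 ^ ⌈Real.log x⌉₊ :=
        pow_le_pow_left₀ (Real.exp_pos 1).le (Real.exp_one_lt_d9.le.trans (by norm_num)) _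

theorem statement19_general {Ω : Type*} [MeasurableSpace Ω] (μ : Measure Ω) [IsProbabilityMeasure μ]
    (n : ℕ) (hn : 2 ≤ n) (r : ℕ)
    (X : Fin r → Ω → ℝ) (hmeas : ∀ i, Measurable (X i))
    (hdist : ∀ i, μ.map (X i) = _root_.betaMeasure (1 / 2) (((n : ℝ) - 1) / 2)) :
    (∫ ω, (⨆ i, X i ω) ∂μ) ≤ (4 * Real.log r + 16) / n := by
  set k := ⌈Real.log r⌉₊ + 1
  have hk : k ≠ 0 := Nat.succ_ne_zero _
  have h01 i : ∀ᵐ ω ∂μ, X i ω ∈ Set.Icc 0 1 := ae_of_ae_map (hmeas i).aemeasurable <| by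
    rw [hdist i]
    exact (ae_mem_Ioo_betaMeasure _ _).mono fun _ h => Set.Ioo_subset_Icc_self h
  have hmom i : ∫ ω, X i ω ^ k ∂μ ≤ ((k : ℝ) / n) ^ k := by
    rw [← integral_map (f := fun x : ℝ => x ^ k) (hmeas i).aemeasurable (by fun_prop), hdist i]
    exact integral_pow_betaMeasure_half_le hn k
  have hpow : (∫ ω, ⨆ i, X i ω ∂μ) ^ k ≤ (3 * k / n) ^ k :=
    calc (∫ ω, ⨆ i, X i ω ∂μ) ^ k ≤ ∑ i, ∫ ω, X i ω ^ k ∂μ := integral_iSup_pow_le_sum hmeas h01 hk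
      _ ≤ ∑ _i : Fin r, ((k : ℝ) / n) ^ k := sum_le_sum fun i _ => hmom i
      _ = r * ((k : ℝ) / n) ^ k := by simp
      _ ≤ 3 ^ k * ((k : ℝ) / n) ^ k := by
          gcongr
          exact (le_three_pow_ceil_log r).trans (pow_le_pow_right₀ (by norm_num) (Nat.le_succ _))
      _ = (3 * k / n) ^ k := by rw [← mul_pow, mul_div_assoc]
  calc ∫ ω, ⨆ i, X i ω ∂μ ≤ 3 * k / n := le_of_pow_le_pow_left₀ hk (by positivity) hpow
    _ ≤ (4 * Real.log r + 16) / n := by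
        have hlog := Real.log_natCast_nonneg r
        have hceil := Nat.ceil_lt_add_one hlog
        gcongr
        push_cast [k]
        linarith

/-- If `X_1, …, X_r` are i.i.d. `Beta(1/2, (n−1)/2)` random variables with `n ≥ 2`, then
`E[max_i X_i] ≤ (4 log r + 16)/n`. -/
theorem statement19 {Ω : Type*} [MeasurableSpace Ω] (μ : Measure Ω) [IsProbabilityMeasure μ]
    (n : ℕ) (hn : 2 ≤ n) (r : ℕ) (hr : 1 ≤ r)
    (X : Fin r → Ω → ℝ) (hmeas : ∀ i, Measurable (X i))
    (hdist : ∀ i, μ.map (X i) = _root_.betaMeasure (1 / 2) (((n : ℝ) - 1) / 2))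
    (hindep : iIndepFun X μ) :
    (∫ ω, (⨆ i, X i ω) ∂μ) ≤ (4 * Real.log r + 16) / n :=
  statement19_general μ n hn r X hmeas hdist

end
end
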